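/- arXiv:2103.10752 — 5 statements merged into one kernel-verified Lean document; each statement's English description precedes it below -/
import Mathlib

section
/- Let S be a nonempty finite type, P : Matrix S S ℝ a column-stochastic matrix, γ ∈ (0,1), and p₀ : S → ℝ. Let F := ∑_{t=0}^∞ γ^t (P^t).mulVec p₀ and let A f := p₀ + γ • P.mulVec f be the forward Bellman operator. Then for every f : S → ℝ and every L ∈ ℕ, ∑_i |F i − (A^[L] f) i| ≤ γ^L · ∑_i |F i − f i|; in particular A^[L] f converges to F as L → ∞, for arbitrary initial function f. -/
/-!
The forward Bellman operator `A f = p₀ + γ • P *ᵥ f` is affine with linear part `γ • P`, and a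
column-stochastic `P` does not increase the ℓ1 norm, so `A` is a `γ`-contraction for the ℓ1
distance. Shifting the series `F = ∑ γᵗ Pᵗ p₀` by one index shows `A F = F`, hence the ℓ1
distance from `F` shrinks by the factor `γ` at every step, and `γᴸ → 0` gives convergence.
-/

open Finset Filter Topology

namespace Matrix

variable {m n : Type*} [Fintype m] [Fintype n]

theorem sum_abs_mulVec_le {P : Matrix m n ℝ} (hP : ∀ j, ∑ i, |P i j| ≤ 1) (v : n → ℝ) :
    ∑ i, |(P *ᵥ v) i| ≤ ∑ j, |v j| :=
  calc ∑ i, |(P *ᵥ v) i| ≤ ∑ i, ∑ j, |P i j| * |v j| := by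
        gcongr with i
        exact (abs_sum_le_sum_abs _ _).trans_eq (by simp only [abs_mul])
    _ = ∑ j, (∑ i, |P i j|) * |v j| := by rw [sum_comm]; simp_rw [sum_mul]
    _ ≤ ∑ j, |v j| := by gcongr with j; exact mul_le_of_le_one_left (abs_nonneg _) (hP j)

theorem sum_abs_sub_add_smul_mulVec_le {P : Matrix m n ℝ} (hP : ∀ j, ∑ i, |P i j| ≤ 1)
    {γ : ℝ} (hγ : 0 ≤ γ) (p₀ : m → ℝ) (f g : n → ℝ) :
    ∑ i, |(p₀ + γ • P *ᵥ f) i - (p₀ + γ • P *ᵥ g) i| ≤ γ * ∑ j, |f j - g j| := by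
  have hdiff : ∀ i, (p₀ + γ • P *ᵥ f) i - (p₀ + γ • P *ᵥ g) i = γ * (P *ᵥ (f - g)) i := by
    intro i
    simp only [Pi.add_apply, Pi.smul_apply, smul_eq_mul, mulVec_sub, Pi.sub_apply]
    ring
  simp_rw [hdiff, abs_mul, abs_of_nonneg hγ, ← mul_sum]
  exact mul_le_mul_of_nonneg_left (sum_abs_mulVec_le hP (f - g)) hγ

theorem add_smul_mulVec_eq_of_hasSum [DecidableEq m] {P : Matrix m m ℝ} {γ : ℝ} {p₀ F : m → ℝ}
    (hF : HasSum (fun t : ℕ => γ ^ t • (P ^ t) *ᵥ p₀) F) : p₀ + γ • P *ᵥ F = F := by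
  have hshift : HasSum (fun t : ℕ => γ ^ (t + 1) • (P ^ (t + 1)) *ᵥ p₀) (γ • P *ᵥ F) := by
    simpa [pow_succ', smul_smul, mul_comm γ, mulVec_mulVec, mulVec_smul] using
      hF.mapL (γ • mulVecLin P).toContinuousLinearMap
  have := ((hasSum_nat_add_iff 1).mp hshift).unique hF
  simpa [add_comm] using this

end Matrix

theorem Function.iterate_le_pow_mul_of_le_mul {α : Type*} {A : α → α} {d : α → ℝ} {γ : ℝ}
    (hγ : 0 ≤ γ) (h : ∀ x, d (A x) ≤ γ * d x) (x : α) (L : ℕ) :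
    d (A^[L] x) ≤ γ ^ L * d x := by
  induction L with
  | zero => simp
  | succ L ih =>
    rw [Function.iterate_succ_apply', pow_succ', mul_assoc]
    exact (h _).trans (mul_le_mul_of_nonneg_left ih hγ)

theorem tendsto_pi_of_sum_abs_sub_le {ι α : Type*} [Fintype ι] {l : Filter α} {u : α → ι → ℝ}
    {F : ι → ℝ} {b : α → ℝ} (hb : Tendsto b l (𝓝 0)) (h : ∀ a, ∑ i, |F i - u a i| ≤ b a) :
    Tendsto u l (𝓝 F) := by
  refine tendsto_pi_nhds.mpr fun i => tendsto_iff_dist_tendsto_zero.mpr ?_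
  refine squeeze_zero (fun _ => dist_nonneg) (fun a => ?_) hb
  rw [Real.dist_eq, abs_sub_comm]
  exact (single_le_sum (f := fun j => |F j - u a j|) (fun j _ => abs_nonneg _)
    (mem_univ i)).trans (h a)

theorem forward_bellman_iterates_converge_general
    {S : Type*} [Fintype S] [DecidableEq S]
    (P : Matrix S S ℝ) (hP0 : ∀ i j, 0 ≤ P i j) (hP1 : ∀ j, ∑ i, P i j = 1)
    (γ : ℝ) (hγ : γ ∈ Set.Ioo (0 : ℝ) 1) (p₀ : S → ℝ)
    (F : S → ℝ) (hF : HasSum (fun t : ℕ => γ ^ t • (P ^ t).mulVec p₀) F)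
    (A : (S → ℝ) → (S → ℝ)) (hA : ∀ f, A f = p₀ + γ • P.mulVec f) :
    ∀ f : S → ℝ,
      (∀ L : ℕ, ∑ i, |F i - (A^[L] f) i| ≤ γ ^ L * ∑ i, |F i - f i|) ∧
      Filter.Tendsto (fun L : ℕ => A^[L] f) Filter.atTop (nhds F) := by
  obtain ⟨hγ0, hγ1⟩ := hγ
  have hP : ∀ j, ∑ i, |P i j| ≤ 1 := fun j => by simp_rw [abs_of_nonneg (hP0 _ j), hP1 j]; rfl
  have hfix : A F = F := (hA F).trans (Matrix.add_smul_mulVec_eq_of_hasSum hF)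
  have hcontr (g : S → ℝ) : ∑ i, |F i - A g i| ≤ γ * ∑ i, |F i - g i| := by
    have := Matrix.sum_abs_sub_add_smul_mulVec_le hP hγ0.le p₀ F g
    rwa [← hA, ← hA, hfix] at this
  intro f
  have hbound := Function.iterate_le_pow_mul_of_le_mul (d := fun g => ∑ i, |F i - g i|)
    hγ0.le hcontr f
  refine ⟨hbound, tendsto_pi_of_sum_abs_sub_le ?_ hbound⟩
  simpa using (tendsto_pow_atTop_nhds_zero_of_lt_one hγ0.le hγ1).mul_const (∑ i, |F i - f i|)

/-- Iterating the forward Bellman operator from an arbitrary initial function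
converges geometrically (in ℓ1) to the frequency function `F = ∑_t γ^t Pᵗ p₀`. -/
theorem forward_bellman_iterates_converge
    {S : Type*} [Fintype S] [Nonempty S] [DecidableEq S]
    (P : Matrix S S ℝ) (hP0 : ∀ i j, 0 ≤ P i j) (hP1 : ∀ j, ∑ i, P i j = 1)
    (γ : ℝ) (hγ : γ ∈ Set.Ioo (0 : ℝ) 1) (p₀ : S → ℝ)
    (F : S → ℝ) (hF : HasSum (fun t : ℕ => γ ^ t • (P ^ t).mulVec p₀) F)
    (A : (S → ℝ) → (S → ℝ)) (hA : ∀ f, A f = p₀ + γ • P.mulVec f) :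
    ∀ f : S → ℝ,
      (∀ L : ℕ, ∑ i, |F i - (A^[L] f) i| ≤ γ ^ L * ∑ i, |F i - f i|) ∧
      Filter.Tendsto (fun L : ℕ => A^[L] f) Filter.atTop (nhds F) :=
  forward_bellman_iterates_converge_general P hP0 hP1 γ hγ p₀ F hF A hA
end

section
/- Let S be a nonempty finite type, P : Matrix S S ℝ a column-stochastic matrix, γ ∈ (0,1), and r : S → ℝ. Let V := ∑_{t=0}^∞ γ^t (Pᵀ^t).mulVec r and let B v := r + γ • Pᵀ.mulVec v be the backward Bellman operator. Then for every v : S → ℝ and every L ∈ ℕ, max_i |V i − (B^[L] v) i| ≤ γ^L · max_i |V i − v i|; in particular B^[L] v converges to V as L → ∞, for arbitrary initial function v. -/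
/-!
`V` is a fixed point of `B`: shifting the series `∑ γᵗ (Pᵀ)ᵗ r` by one index is applying
`v ↦ γ • Pᵀ *ᵥ v`. Since `Pᵀ` is row-stochastic, each entry of `Pᵀ *ᵥ v` is a convex
combination of entries of `v`, so `B` is a `γ`-contraction for the sup norm, and the distance from
`B^[L] v` to the fixed point `V` shrinks by a factor `γ` at every step.
-/

open Finset Function Matrix

lemma dist_pi_eq_sup'_abs_sub {ι : Type*} [Fintype ι] [Nonempty ι] (f g : ι → ℝ) :
    dist f g = univ.sup' univ_nonempty (fun i => |f i - g i|) := by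
  obtain ⟨i₀⟩ := ‹Nonempty ι›
  have hsup_nonneg : 0 ≤ univ.sup' univ_nonempty (fun i => |f i - g i|) :=
    le_sup'_of_le _ (mem_univ i₀) (abs_nonneg _)
  rw [dist_eq_norm]
  exact le_antisymm
    ((pi_norm_le_iff_of_nonneg hsup_nonneg).2 fun i => le_sup' (fun i => |f i - g i|) (mem_univ i))
    (sup'_le _ _ fun i _ => norm_le_pi_norm (f - g) i)

lemma LipschitzWith.dist_iterate_le_of_isFixedPt {α : Type*} [PseudoMetricSpace α] {K : NNReal}
    {f : α → α} (hf : LipschitzWith K f) {x : α} (hx : IsFixedPt f x) (y : α) (n : ℕ) :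
    dist (f^[n] y) x ≤ K ^ n * dist y x := by
  simpa only [(hx.iterate n).eq, NNReal.coe_pow] using (hf.iterate n).dist_le_mul y x

namespace Matrix

variable {n : Type*} [Fintype n] [DecidableEq n]

lemma norm_mulVec_le_of_mem_rowStochastic {M : Matrix n n ℝ} (hM : M ∈ rowStochastic ℝ n)
    (v : n → ℝ) : ‖M *ᵥ v‖ ≤ ‖v‖ := by
  refine (pi_norm_le_iff_of_nonneg (norm_nonneg v)).2 fun i => ?_
  calc ‖(M *ᵥ v) i‖ = |∑ j, M i j * v j| := rfl
    _ ≤ ∑ j, |M i j * v j| := abs_sum_le_sum_abs _ _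
    _ ≤ ∑ j, M i j * ‖v‖ := sum_le_sum fun j _ => by
        rw [abs_mul, abs_of_nonneg (nonneg_of_mem_rowStochastic hM)]
        exact mul_le_mul_of_nonneg_left (norm_le_pi_norm v j) (nonneg_of_mem_rowStochastic hM)
    _ = ‖v‖ := by rw [← sum_mul, sum_row_of_mem_rowStochastic hM i, one_mul]

lemma lipschitzWith_add_smul_mulVec_of_mem_rowStochastic {M : Matrix n n ℝ}
    (hM : M ∈ rowStochastic ℝ n) {γ : ℝ} (hγ : 0 ≤ γ) (r : n → ℝ) :
    LipschitzWith (Real.toNNReal γ) (fun v => r + γ • M *ᵥ v) := by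
  refine LipschitzWith.of_dist_le_mul fun v w => ?_
  rw [Real.coe_toNNReal γ hγ, dist_eq_norm, dist_eq_norm, add_sub_add_left_eq_sub, ← smul_sub,
    ← mulVec_sub, norm_smul, Real.norm_of_nonneg hγ]
  exact mul_le_mul_of_nonneg_left (norm_mulVec_le_of_mem_rowStochastic hM _) hγ

lemma add_smul_mulVec_eq_of_hasSum_s11 {R : Type*} [CommRing R] [TopologicalSpace R]
    [IsTopologicalRing R] [T2Space R] {A : Matrix n n R} {c : R} {r V : n → R}
    (hV : HasSum (fun t : ℕ => c ^ t • (A ^ t) *ᵥ r) V) : r + c • A *ᵥ V = V := by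
  have hshift :
      HasSum (fun t : ℕ => c ^ (t + 1) • (A ^ (t + 1)) *ᵥ r) ((c • A) *ᵥ V) := by
    convert hV.map (mulVecLin (c • A)).toAddMonoidHom
      (Continuous.matrix_mulVec continuous_const continuous_id) using 1
    ext t : 1
    simp only [pow_succ', map_smul, LinearMap.toAddMonoidHom_coe, LinearMap.coe_smul,
      Function.comp_apply, Pi.smul_apply, mulVecBilin_apply, mulVec_mulVec, smul_smul]
    rfl
  have hsum := (hasSum_nat_add_iff (f := fun t : ℕ => c ^ t • (A ^ t) *ᵥ r) 1).1 hshift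
  simpa [add_comm, smul_mulVec] using (hV.unique hsum).symm

end Matrix

/-- Iterating the backward Bellman operator from an arbitrary initial function
converges geometrically (in sup norm) to the value function `V = ∑_t γ^t (Pᵀ)ᵗ r`. -/
theorem backward_bellman_iterates_converge
    {S : Type*} [Fintype S] [Nonempty S] [DecidableEq S]
    (P : Matrix S S ℝ) (hP0 : ∀ i j, 0 ≤ P i j) (hP1 : ∀ j, ∑ i, P i j = 1)
    (γ : ℝ) (hγ : γ ∈ Set.Ioo (0 : ℝ) 1) (r : S → ℝ)
    (V : S → ℝ) (hV : HasSum (fun t : ℕ => γ ^ t • (P.transpose ^ t).mulVec r) V)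
    (B : (S → ℝ) → (S → ℝ)) (hB : ∀ v, B v = r + γ • P.transpose.mulVec v) :
    ∀ v : S → ℝ,
      (∀ L : ℕ,
        Finset.univ.sup' Finset.univ_nonempty (fun i => |V i - (B^[L] v) i|)
          ≤ γ ^ L * Finset.univ.sup' Finset.univ_nonempty (fun i => |V i - v i|)) ∧
      Filter.Tendsto (fun L : ℕ => B^[L] v) Filter.atTop (nhds V) := by
  obtain rfl : B = fun v => r + γ • Pᵀ *ᵥ v := funext hB
  have hPT : Pᵀ ∈ rowStochastic ℝ S :=
    transpose_mem_rowStochastic_iff_mem_colStochastic.2 (mem_colStochastic_iff_sum.2 ⟨hP0, hP1⟩)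
  have hfix : IsFixedPt (fun v => r + γ • Pᵀ *ᵥ v) V := add_smul_mulVec_eq_of_hasSum_s11 hV
  have hcontr : ContractingWith (Real.toNNReal γ) (fun v => r + γ • Pᵀ *ᵥ v) :=
    ⟨Real.toNNReal_lt_one.2 hγ.2,
      lipschitzWith_add_smul_mulVec_of_mem_rowStochastic hPT hγ.1.le r⟩
  intro v
  refine ⟨fun L => ?_, hcontr.fixedPoint_unique hfix ▸ hcontr.tendsto_iterate_fixedPoint v⟩
  simpa only [← dist_pi_eq_sup'_abs_sub, dist_comm V, Real.coe_toNNReal γ hγ.1.le]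
    using hcontr.toLipschitzWith.dist_iterate_le_of_isFixedPt hfix v L
end

section
/- Let S be a nonempty finite type, P : Matrix S S ℝ a column-stochastic matrix, γ ∈ (0,1), and let p₀ : S → ℝ be a probability vector (entries nonnegative, summing to 1). Let A f := p₀ + γ • P.mulVec f. Then for every L ≥ 1, ∑_i |(A^[L] p₀) i − (A^[L−1] p₀) i| ≤ γ^L. -/
/-! The forward Bellman operator `A f = p₀ + γ • P *ᵥ f` is a `γ`-contraction for the ℓ1 norm,
because a column-stochastic matrix does not increase the ℓ1 norm. Since `A 0 = p₀`, the first
step satisfies `‖A p₀ - p₀‖₁ = ‖A p₀ - A 0‖₁ ≤ γ ‖p₀‖₁ = γ`, and each further step gains a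
factor `γ`. -/

open Finset Matrix

section

variable {ι : Type*} [Fintype ι]

theorem Matrix.sum_abs_mulVec_le_s16 (P : Matrix ι ι ℝ) (hP0 : ∀ i j, 0 ≤ P i j)
    (hP1 : ∀ j, ∑ i, P i j ≤ 1) (v : ι → ℝ) : ∑ i, |(P *ᵥ v) i| ≤ ∑ j, |v j| :=
  calc ∑ i, |(P *ᵥ v) i| ≤ ∑ i, ∑ j, P i j * |v j| := by
        refine sum_le_sum fun i _ => (abs_sum_le_sum_abs _ _).trans_eq ?_
        simp only [abs_mul, abs_of_nonneg (hP0 i _)]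
    _ = ∑ j, (∑ i, P i j) * |v j| := by rw [sum_comm]; simp only [sum_mul]
    _ ≤ ∑ j, |v j| :=
        sum_le_sum fun j _ => mul_le_of_le_one_left (abs_nonneg _) (hP1 j)

theorem sum_abs_affine_mulVec_sub_le (P : Matrix ι ι ℝ) (hP0 : ∀ i j, 0 ≤ P i j)
    (hP1 : ∀ j, ∑ i, P i j ≤ 1) {γ : ℝ} (hγ : 0 ≤ γ) (b f g : ι → ℝ) :
    ∑ i, |(b + γ • P *ᵥ f) i - (b + γ • P *ᵥ g) i| ≤ γ * ∑ i, |f i - g i| := by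
  have hdiff : (b + γ • P *ᵥ f) - (b + γ • P *ᵥ g) = γ • P *ᵥ (f - g) := by
    rw [add_sub_add_left_eq_sub, ← smul_sub, ← Matrix.mulVec_sub]
  calc ∑ i, |(b + γ • P *ᵥ f) i - (b + γ • P *ᵥ g) i| = γ * ∑ i, |(P *ᵥ (f - g)) i| := by
        simp only [← Pi.sub_apply, hdiff, Pi.smul_apply, smul_eq_mul, abs_mul,
          abs_of_nonneg hγ, mul_sum]
    _ ≤ γ * ∑ i, |f i - g i| :=
        mul_le_mul_of_nonneg_left (P.sum_abs_mulVec_le_s16 hP0 hP1 (f - g)) hγ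

theorem sum_abs_iterate_succ_sub_le {T : (ι → ℝ) → ι → ℝ} {c : ℝ} (hc : 0 ≤ c)
    (hT : ∀ f g, ∑ i, |T f i - T g i| ≤ c * ∑ i, |f i - g i|) (x : ι → ℝ) (n : ℕ) :
    ∑ i, |T^[n + 1] x i - T^[n] x i| ≤ c ^ n * ∑ i, |T x i - x i| := by
  induction n with
  | zero => simp
  | succ n ih =>
    calc ∑ i, |T^[n + 2] x i - T^[n + 1] x i|
        = ∑ i, |T (T^[n + 1] x) i - T (T^[n] x) i| := by
          rw [Function.iterate_succ_apply' T (n + 1), Function.iterate_succ_apply' T n]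
      _ ≤ c * (c ^ n * ∑ i, |T x i - x i|) := (hT _ _).trans (mul_le_mul_of_nonneg_left ih hc)
      _ = c ^ (n + 1) * ∑ i, |T x i - x i| := by ring

end

theorem forward_bellman_iterate_difference_bound_general
    {S : Type*} [Fintype S]
    (P : Matrix S S ℝ) (hP0 : ∀ i j, 0 ≤ P i j) (hP1 : ∀ j, ∑ i, P i j = 1)
    (γ : ℝ) (hγ : γ ∈ Set.Ioo (0 : ℝ) 1)
    (p₀ : S → ℝ) (hp0 : ∀ i, 0 ≤ p₀ i) (hp1 : ∑ i, p₀ i = 1)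
    (A : (S → ℝ) → (S → ℝ)) (hA : ∀ f, A f = p₀ + γ • P.mulVec f) :
    ∀ L : ℕ, 1 ≤ L → ∑ i, |(A^[L] p₀) i - (A^[L - 1] p₀) i| ≤ γ ^ L := by
  have hγ0 : 0 ≤ γ := hγ.1.le
  have hLip : ∀ f g, ∑ i, |A f i - A g i| ≤ γ * ∑ i, |f i - g i| := fun f g => by
    simpa only [hA] using
      sum_abs_affine_mulVec_sub_le P hP0 (fun j => (hP1 j).le) hγ0 p₀ f g
  have hfirst : ∑ i, |A p₀ i - p₀ i| ≤ γ := by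
    have hA0 : A 0 = p₀ := by rw [hA, Matrix.mulVec_zero, smul_zero, add_zero]
    have hnorm : ∑ i, |p₀ i| = 1 := by simp only [abs_of_nonneg (hp0 _), hp1]
    simpa [hA0, hnorm] using hLip p₀ 0
  rintro L hL
  obtain ⟨n, rfl⟩ : ∃ n, L = n + 1 := ⟨L - 1, by omega⟩
  calc ∑ i, |A^[n + 1] p₀ i - A^[n + 1 - 1] p₀ i|
      ≤ γ ^ n * ∑ i, |A p₀ i - p₀ i| := sum_abs_iterate_succ_sub_le hγ0 hLip p₀ n
    _ ≤ γ ^ n * γ := mul_le_mul_of_nonneg_left hfirst (pow_nonneg hγ0 n)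
    _ = γ ^ (n + 1) := (pow_succ γ n).symm

/-- When the forward Bellman iteration is initialized at the initial distribution `p₀`,
consecutive iterates differ by at most `γ^L` in ℓ1 norm. -/
theorem forward_bellman_iterate_difference_bound
    {S : Type*} [Fintype S] [Nonempty S]
    (P : Matrix S S ℝ) (hP0 : ∀ i j, 0 ≤ P i j) (hP1 : ∀ j, ∑ i, P i j = 1)
    (γ : ℝ) (hγ : γ ∈ Set.Ioo (0 : ℝ) 1)
    (p₀ : S → ℝ) (hp0 : ∀ i, 0 ≤ p₀ i) (hp1 : ∑ i, p₀ i = 1)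
    (A : (S → ℝ) → (S → ℝ)) (hA : ∀ f, A f = p₀ + γ • P.mulVec f) :
    ∀ L : ℕ, 1 ≤ L → ∑ i, |(A^[L] p₀) i - (A^[L - 1] p₀) i| ≤ γ ^ L :=
  forward_bellman_iterate_difference_bound_general P hP0 hP1 γ hγ p₀ hp0 hp1 A hA
end

section
/- Let S be a nonempty finite type, P : Matrix S S ℝ a column-stochastic matrix, γ ∈ (0,1), and let r : S → ℝ satisfy 0 ≤ r i ≤ 1 for all i. Let B v := r + γ • Pᵀ.mulVec v. Then for every L ≥ 1, max_i |(B^[L] r) i − (B^[L−1] r) i| ≤ γ^L. -/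
/-!
Writing `B v = r + A v` with `A = γ • Pᵀ`, consecutive iterates of an affine map differ by an
iterate of its linear part: `B^[k+1] r - B^[k] r = A^[k] (B r - r) = A^[k+1] r`. Since `P` is
column-stochastic, each entry of `Pᵀ *ᵥ x` is a convex combination of entries of `x`, so every
application of `A` shrinks the sup norm by a factor `γ`, and `|r| ≤ 1` gives the bound `γ^(k+1)`.
-/

open Matrix

theorem iterate_succ_sub_iterate_of_eq_add {V F : Type*} [AddCommGroup V] [FunLike F V V]
    [AddMonoidHomClass F V V] (A : F) (b : V) (B : V → V) (hB : ∀ v, B v = b + A v)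
    (v : V) (k : ℕ) : B^[k + 1] v - B^[k] v = (⇑A)^[k] (B v - v) := by
  have hstep : ∀ u w, B u - B w = A (u - w) := fun u w => by
    rw [hB u, hB w, add_sub_add_left_eq_sub, map_sub]
  induction k generalizing v with
  | zero => rfl
  | succ k ih =>
    rw [Function.iterate_succ_apply B (k + 1) v, Function.iterate_succ_apply B k v, ih, hstep,
      ← Function.iterate_succ_apply]

section ColumnStochastic

variable {S : Type*} [Fintype S] {P : Matrix S S ℝ}

theorem abs_transpose_mulVec_le (hP0 : ∀ i j, 0 ≤ P i j) (hP1 : ∀ j, ∑ i, P i j = 1)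
    {x : S → ℝ} {M : ℝ} (hx : ∀ j, |x j| ≤ M) (i : S) : |(Pᵀ *ᵥ x) i| ≤ M :=
  calc |(Pᵀ *ᵥ x) i| ≤ ∑ j, P j i * |x j| := by
        simp only [mulVec, dotProduct, transpose_apply]
        refine (Finset.abs_sum_le_sum_abs _ _).trans_eq ?_
        simp only [abs_mul, abs_of_nonneg (hP0 _ i)]
    _ ≤ ∑ j, P j i * M := by gcongr with j; exact hP0 j i; exact hx j
    _ = M := by rw [← Finset.sum_mul, hP1 i, one_mul]

theorem abs_iterate_smul_mulVecLin_transpose_le (hP0 : ∀ i j, 0 ≤ P i j)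
    (hP1 : ∀ j, ∑ i, P i j = 1) {γ : ℝ} (hγ : 0 ≤ γ) {x : S → ℝ} {M : ℝ}
    (hx : ∀ j, |x j| ≤ M) (n : ℕ) (i : S) :
    |((⇑(γ • Pᵀ.mulVecLin))^[n] x) i| ≤ γ ^ n * M := by
  induction n generalizing i with
  | zero => simpa using hx i
  | succ n ih =>
    rw [Function.iterate_succ_apply', LinearMap.smul_apply, Pi.smul_apply, smul_eq_mul,
      abs_mul, abs_of_nonneg hγ, pow_succ', mul_assoc]
    exact mul_le_mul_of_nonneg_left (abs_transpose_mulVec_le hP0 hP1 ih i) hγ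

end ColumnStochastic

/-- When the backward Bellman iteration is initialized at the normalized reward `r`,
consecutive iterates differ by at most `γ^L` in sup norm. -/
theorem backward_bellman_iterate_difference_bound
    {S : Type*} [Fintype S] [Nonempty S]
    (P : Matrix S S ℝ) (hP0 : ∀ i j, 0 ≤ P i j) (hP1 : ∀ j, ∑ i, P i j = 1)
    (γ : ℝ) (hγ : γ ∈ Set.Ioo (0 : ℝ) 1)
    (r : S → ℝ) (hr : ∀ i, 0 ≤ r i ∧ r i ≤ 1)
    (B : (S → ℝ) → (S → ℝ)) (hB : ∀ v, B v = r + γ • P.transpose.mulVec v) :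
    ∀ L : ℕ, 1 ≤ L →
      Finset.univ.sup' Finset.univ_nonempty (fun i => |(B^[L] r) i - (B^[L - 1] r) i|)
        ≤ γ ^ L := by
  intro L hL
  obtain ⟨k, rfl⟩ : ∃ k, L = k + 1 := ⟨L - 1, by omega⟩
  set A := γ • Pᵀ.mulVecLin
  have hBA : ∀ v, B v = r + A v := hB
  have hdiff : B^[k + 1] r - B^[k] r = (⇑A)^[k + 1] r := by
    rw [iterate_succ_sub_iterate_of_eq_add A r B hBA, hBA r, add_sub_cancel_left,
      Function.iterate_succ_apply]
  have hr_abs : ∀ j, |r j| ≤ 1 := fun j => abs_le.2 ⟨by linarith [(hr j).1], (hr j).2⟩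
  refine Finset.sup'_le _ _ fun i _ => ?_
  rw [Nat.add_sub_cancel, ← Pi.sub_apply, hdiff, ← mul_one (γ ^ (k + 1))]
  exact abs_iterate_smul_mulVecLin_transpose_le hP0 hP1 hγ.1.le hr_abs (k + 1) i
end

section
/- Let S be a nonempty finite type, P : Matrix S S ℝ a column-stochastic matrix, γ ∈ (0,1), ε > 0, and let p₀ : S → ℝ be a probability vector (entries nonnegative, summing to 1). Let A f := p₀ + γ • P.mulVec f and F := ∑_{t=0}^∞ γ^t (P^t).mulVec p₀. If L ∈ ℕ satisfies γ^L < ((1−γ)/γ) ε, then max_i |F i − (A^[L] p₀) i| < ε + γ^L; more precisely, ∑_i |F i − (A^[L] p₀) i| ≤ γ^{L+1}/(1−γ), so if in addition L > log((1−γ)ε)/log(γ) − 1 then max_i |F i − (A^[L] p₀) i| < ε. -/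
/-!
Unrolling the affine recursion gives `A^[L] p₀ = ∑_{t ≤ L} γ^t P^t p₀`, so `F - A^[L] p₀` is the
tail `∑_{t > L} γ^t P^t p₀` of the series. Powers of a column-stochastic matrix are
column-stochastic, so every `P^t p₀` is again a probability vector; hence the tail is entrywise
nonnegative and its ℓ1 norm is exactly the geometric tail `∑_{t > L} γ^t = γ^{L+1}/(1-γ)`.
The sup norm is bounded by the ℓ1 norm, and both conditions on `L` force `γ^{L+1} < (1-γ) ε`.
-/

open Finset Matrix

theorem iterate_add_smul_mulVec_self {R n : Type*} [CommSemiring R] [Fintype n] [DecidableEq n]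
    (P : Matrix n n R) (γ : R) (p : n → R) (L : ℕ) :
    (fun f => p + γ • P *ᵥ f)^[L] p = ∑ t ∈ range (L + 1), γ ^ t • (P ^ t) *ᵥ p := by
  induction L with
  | zero => simp
  | succ L ih =>
    rw [Function.iterate_succ_apply', ih, sum_range_succ' _ (L + 1), mulVec_sum, smul_sum,
      add_comm]
    simp only [mulVec_smul, smul_smul, mulVec_mulVec, pow_succ', pow_zero, one_smul,
      one_mulVec]

theorem sum_abs_eq_of_hasSum_smul_of_sum_eq_one {ι S : Type*} [Fintype S] {c : ι → ℝ}
    {w : ι → S → ℝ} {d : S → ℝ} {a : ℝ} (hc : ∀ n, 0 ≤ c n) (hw0 : ∀ n i, 0 ≤ w n i)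
    (hw1 : ∀ n, ∑ i, w n i = 1) (hd : HasSum (fun n => c n • w n) d) (ha : HasSum c a) :
    ∑ i, |d i| = a := by
  have hdi : ∀ i, HasSum (fun n => c n * w n i) (d i) := fun i => by
    simpa using Pi.hasSum.mp hd i
  have hd0 : ∀ i, 0 ≤ d i := fun i => (hdi i).nonneg fun n => mul_nonneg (hc n) (hw0 n i)
  have hsum : HasSum c (∑ i, d i) := by
    simpa [← mul_sum, hw1] using hasSum_sum (s := univ) fun i _ => hdi i
  rw [sum_congr rfl fun i _ => abs_of_nonneg (hd0 i)]
  exact hsum.unique ha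

theorem hasSum_geometric_add_of_lt_one {γ : ℝ} (h0 : 0 ≤ γ) (h1 : γ < 1) (k : ℕ) :
    HasSum (fun n => γ ^ (n + k)) (γ ^ k / (1 - γ)) := by
  simpa [pow_add, mul_comm, div_eq_mul_inv] using
    (hasSum_geometric_of_lt_one h0 h1).mul_left (γ ^ k)

theorem Finset.sup'_le_sum_of_nonneg {ι M : Type*} [AddCommMonoid M] [LinearOrder M]
    [IsOrderedAddMonoid M] {s : Finset ι} (H : s.Nonempty) {f : ι → M} (hf : ∀ i ∈ s, 0 ≤ f i) :
    s.sup' H f ≤ ∑ i ∈ s, f i :=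
  sup'_le H f fun _ hi => single_le_sum hf hi

theorem pow_succ_lt_of_log_div_log_sub_one_lt {γ x : ℝ} (h0 : 0 < γ) (h1 : γ < 1) (hx : 0 < x)
    {L : ℕ} (hL : Real.log x / Real.log γ - 1 < L) : γ ^ (L + 1) < x := by
  have hlog : Real.log γ < 0 := Real.log_neg h0 h1
  have : (L + 1 : ℝ) * Real.log γ < Real.log x := by
    rw [← div_lt_iff_of_neg hlog]
    linarith
  rw [Real.pow_lt_iff_lt_log h0 hx]
  exact_mod_cast this

/-- Guarantee `L_max ≤ T_max` for MBEM initialized at `p₀`: the error of the `L`-th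
forward Bellman iterate is at most `γ^{L+1}/(1-γ)`, hence smaller than `ε` (plus `γ^L`)
under the respective conditions on `L`. -/
theorem mbem_forward_error_guarantee
    {S : Type*} [Fintype S] [Nonempty S] [DecidableEq S]
    (P : Matrix S S ℝ) (hP0 : ∀ i j, 0 ≤ P i j) (hP1 : ∀ j, ∑ i, P i j = 1)
    (γ : ℝ) (hγ : γ ∈ Set.Ioo (0 : ℝ) 1) (ε : ℝ) (hε : 0 < ε)
    (p₀ : S → ℝ) (hp0 : ∀ i, 0 ≤ p₀ i) (hp1 : ∑ i, p₀ i = 1)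
    (A : (S → ℝ) → (S → ℝ)) (hA : ∀ f, A f = p₀ + γ • P.mulVec f)
    (F : S → ℝ) (hF : HasSum (fun t : ℕ => γ ^ t • (P ^ t).mulVec p₀) F) :
    ∀ L : ℕ,
      (γ ^ L < ((1 - γ) / γ) * ε →
        Finset.univ.sup' Finset.univ_nonempty (fun i => |F i - (A^[L] p₀) i|)
          < ε + γ ^ L) ∧
      (∑ i, |F i - (A^[L] p₀) i| ≤ γ ^ (L + 1) / (1 - γ)) ∧
      ((L : ℝ) > Real.log ((1 - γ) * ε) / Real.log γ - 1 →
        Finset.univ.sup' Finset.univ_nonempty (fun i => |F i - (A^[L] p₀) i|) < ε) := by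
  intro L
  obtain ⟨hγ0, hγ1⟩ := hγ
  have hPt : ∀ t, P ^ t ∈ colStochastic ℝ S :=
    pow_mem (mem_colStochastic_iff_sum.2 ⟨hP0, hP1⟩)
  have hiter : A^[L] p₀ = ∑ t ∈ range (L + 1), γ ^ t • (P ^ t) *ᵥ p₀ := by
    rw [show A = fun f => p₀ + γ • P *ᵥ f from funext hA]
    exact iterate_add_smul_mulVec_self P γ p₀ L
  have htail :
      HasSum (fun n => γ ^ (n + (L + 1)) • (P ^ (n + (L + 1))) *ᵥ p₀) (F - A^[L] p₀) := by
    rw [hiter]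
    exact (hasSum_nat_add_iff' (L + 1)).2 hF
  have hl1 : ∑ i, |F i - (A^[L] p₀) i| = γ ^ (L + 1) / (1 - γ) :=
    sum_abs_eq_of_hasSum_smul_of_sum_eq_one (fun _ => by positivity)
      (fun _ => nonneg_mulVec_of_mem_colStochastic (hPt _) hp0)
      (fun _ => (sum_mulVec_of_mem_colStochastic (hPt _)).trans hp1) htail
      (hasSum_geometric_add_of_lt_one hγ0.le hγ1 (L + 1))
  have hsup : γ ^ (L + 1) < (1 - γ) * ε →
      univ.sup' univ_nonempty (fun i => |F i - (A^[L] p₀) i|) < ε := fun h => by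
    refine (sup'_le_sum_of_nonneg _ fun i _ => abs_nonneg _).trans_lt ?_
    rw [hl1, div_lt_iff₀ (by linarith)]
    linarith
  refine ⟨fun h => ?_, hl1.le, fun h => hsup ?_⟩
  · refine (hsup ?_).trans (lt_add_of_pos_right _ (by positivity))
    rw [pow_succ, ← lt_div_iff₀ hγ0]
    linarith [div_mul_eq_mul_div (1 - γ) γ ε]
  · exact pow_succ_lt_of_log_div_log_sub_one_lt hγ0 hγ1 (by nlinarith) h
end
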